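/- arXiv:1305.3993 — 2 statements merged into one kernel-verified Lean document; each statement's English description precedes it below -/
import Mathlib

section
/- (Positivity of the interaction quadratic form) Let φ : ℝ⁴ → ℂ be smooth. For x, y ∈ ℝ⁴ define the symmetric matrix M_{jk}(x,y) := (1/2)[|φ(y)|² Re(∂_j φ̄ ∂_k φ)(x) − Im(φ̄ ∂_j φ)(y) Im(φ̄ ∂_k φ)(x)] + (1/2)[same with x and y swapped]. Then M(x,y) is a positive semi-definite quadratic form on ℝ⁴, i.e. e_j e_k M_{jk}(x,y) ≥ 0 for every e ∈ ℝ⁴. -/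
open scoped BigOperators

/-- The partial derivative `∂_j φ` at `x`. -/
noncomputable def pderiv (φ : (Fin 4 → ℝ) → ℂ) (j : Fin 4) (x : Fin 4 → ℝ) : ℂ :=
  fderiv ℝ φ x (Pi.single j 1)

/-- `Φ_{jk}(x,y) = |φ(y)|² Re(∂_j φ̄ ∂_k φ)(x) - Im(φ̄ ∂_j φ)(y) Im(φ̄ ∂_k φ)(x)`. -/
noncomputable def interactionPhi (φ : (Fin 4 → ℝ) → ℂ) (j k : Fin 4)
    (x y : Fin 4 → ℝ) : ℝ :=
  ‖φ y‖ ^ 2 * ((starRingEnd ℂ) (pderiv φ j x) * pderiv φ k x).re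
    - ((starRingEnd ℂ) (φ y) * pderiv φ j y).im *
        ((starRingEnd ℂ) (φ x) * pderiv φ k x).im

/-- The symmetrized matrix `M_{jk}(x,y) = (Φ_{jk}(x,y) + Φ_{jk}(y,x))/2`. -/
noncomputable def interactionM (φ : (Fin 4 → ℝ) → ℂ) (j k : Fin 4)
    (x y : Fin 4 → ℝ) : ℝ :=
  (interactionPhi φ j k x y + interactionPhi φ j k y x) / 2

/-- Positivity of the interaction quadratic form: for smooth
`φ : ℝ⁴ → ℂ` and any `x, y ∈ ℝ⁴`, the matrix `M_{jk}(x,y)` is a positive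
semi-definite quadratic form: `e_j e_k M_{jk}(x,y) ≥ 0` for every `e ∈ ℝ⁴`. -/
theorem interaction_form_posdef (φ : (Fin 4 → ℝ) → ℂ) (hφ : ContDiff ℝ (⊤ : ℕ∞) φ)
    (x y : Fin 4 → ℝ) (e : Fin 4 → ℝ) :
    0 ≤ ∑ j : Fin 4, ∑ k : Fin 4, e j * e k * interactionM φ j k x y := by
  set A : ℂ := φ x with hA
  set B : ℂ := φ y with hB
  set U : ℂ := ∑ j : Fin 4, (e j : ℂ) * pderiv φ j x with hU
  set V : ℂ := ∑ j : Fin 4, (e j : ℂ) * pderiv φ j y with hV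
  have key : (∑ j : Fin 4, ∑ k : Fin 4, e j * e k * interactionM φ j k x y)
      = (Complex.normSq B * Complex.normSq U + Complex.normSq A * Complex.normSq V) / 2
        - ((starRingEnd ℂ) B * V).im * ((starRingEnd ℂ) A * U).im := by
    simp only [interactionM, interactionPhi, Complex.sq_norm, hU, hV, hA, hB,
      Fin.sum_univ_four, Complex.normSq_apply, Complex.mul_re, Complex.mul_im,
      Complex.add_re, Complex.add_im, Complex.ofReal_re, Complex.ofReal_im,
      Complex.conj_re, Complex.conj_im]
    ring
  rw [key]
  set p : ℝ := ((starRingEnd ℂ) A * U).im with hp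
  set q : ℝ := ((starRingEnd ℂ) B * V).im with hq
  have h1 : p ^ 2 ≤ Complex.normSq A * Complex.normSq U := by
    have := Complex.normSq_mul ((starRingEnd ℂ) A) U
    rw [Complex.normSq_conj] at this
    have h2 : p ^ 2 ≤ Complex.normSq ((starRingEnd ℂ) A * U) := by
      rw [Complex.normSq_apply]; nlinarith [sq_nonneg (((starRingEnd ℂ) A * U).re)]
    linarith
  have h2 : q ^ 2 ≤ Complex.normSq B * Complex.normSq V := by
    have := Complex.normSq_mul ((starRingEnd ℂ) B) V
    rw [Complex.normSq_conj] at this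
    have h3 : q ^ 2 ≤ Complex.normSq ((starRingEnd ℂ) B * V) := by
      rw [Complex.normSq_apply]; nlinarith [sq_nonneg (((starRingEnd ℂ) B * V).re)]
    linarith
  have ha := Complex.normSq_nonneg A
  have hb := Complex.normSq_nonneg B
  have hu := Complex.normSq_nonneg U
  have hv := Complex.normSq_nonneg V
  set a2 := Complex.normSq A
  set b2 := Complex.normSq B
  set u2 := Complex.normSq U
  set v2 := Complex.normSq V
  rcases le_or_gt (q * p) 0 with hqp | hqp
  · nlinarith [mul_nonneg hb hu, mul_nonneg ha hv]
  · have h3 : (q * p) ^ 2 ≤ (b2 * v2) * (a2 * u2) := by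
      calc (q * p) ^ 2 = q ^ 2 * p ^ 2 := by ring
        _ ≤ (b2 * v2) * (a2 * u2) :=
          mul_le_mul h2 h1 (sq_nonneg p) (mul_nonneg hb hv)
    have hS : 0 ≤ b2 * u2 + a2 * v2 := by positivity
    have h4 : (q * p) ^ 2 ≤ ((b2 * u2 + a2 * v2) / 2) ^ 2 := by
      nlinarith [sq_nonneg (b2 * u2 - a2 * v2)]
    nlinarith [h4, hqp, hS]
end

section
/- (Gaussian kernel computation) For s, τ > 0 and ρ > 0, the integral K(τ,z;s,y;x) = (16π²ρ²τs)^{−2} ∫_{ℝ⁴} exp{ i|z−w|²/(4τ) − |x−w|²/ρ² + i|w−y|²/(4s) } dw satisfies sup_{x,y,z ∈ ℝ⁴} |K(τ,z;s,y;x)| ∼ [16 s²τ² + ρ⁴(s+τ)²]^{−1}. -/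
open MeasureTheory

/-- The Gaussian kernel
`K(τ,z;s,y;x) = (16π²ρ²τs)^{-2} ∫ exp{ i|z-w|²/(4τ) - |x-w|²/ρ² + i|w-y|²/(4s) } dw`. -/
noncomputable def gaussKernel (τ s ρ : ℝ) (x y z : EuclideanSpace ℝ (Fin 4)) : ℂ :=
  (((16 * Real.pi ^ 2 * ρ ^ 2 * τ * s : ℝ) : ℂ) ^ 2)⁻¹ *
    ∫ w : EuclideanSpace ℝ (Fin 4),
      Complex.exp (Complex.I * ((‖z - w‖ ^ 2 / (4 * τ) : ℝ) : ℂ)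
        - ((‖x - w‖ ^ 2 / ρ ^ 2 : ℝ) : ℂ)
        + Complex.I * ((‖w - y‖ ^ 2 / (4 * s) : ℝ) : ℂ))

/-! Translating the integration variable by `x` turns the phase into
`i θ - b ‖v‖² + i ⟪u, v⟫` with `θ` real, `b = kernelCoeff τ s ρ = ρ⁻² - i (1/(4τ) + 1/(4s))` and
`u = (x - y)/(2s) + (x - z)/(2τ)`, so the Gaussian integral gives
`|∫| = |π / b|² exp (-‖u‖² Re (b⁻¹) / 4)`. As `Re (b⁻¹) > 0`, the kernel is largest where `u = 0`,
e.g. on the diagonal `x = y = z`, and there `(16π²ρ²τs)⁻² π² / |b|² = (16π² (16s²τ² + ρ⁴(s+τ)²))⁻¹`.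
-/

open Complex GaussianFourier
open scoped Real RealInnerProductSpace

theorem norm_integral_cexp_neg_mul_sq_norm_add_I_mul_inner {V : Type*} [NormedAddCommGroup V]
    [InnerProductSpace ℝ V] [FiniteDimensional ℝ V] [MeasurableSpace V] [BorelSpace V]
    {b : ℂ} (hb : 0 < b.re) (u : V) :
    ‖∫ v : V, cexp (-b * ‖v‖ ^ 2 + I * ⟪u, v⟫)‖ =
      ‖(π / b) ^ (Module.finrank ℝ V / 2 : ℂ)‖ * Real.exp (-(‖u‖ ^ 2 / 4) * (b⁻¹).re) := by
  have hexp : I ^ 2 * (‖u‖ : ℂ) ^ 2 / (4 * b) = ((-(‖u‖ ^ 2 / 4) : ℝ) : ℂ) * b⁻¹ := by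
    rw [I_sq]; push_cast; ring
  rw [integral_cexp_neg_mul_sq_norm_add hb, norm_mul, norm_exp, hexp, re_ofReal_mul]

theorem ciSup_eq_of_forall_le_of_eq {α ι : Type*} [ConditionallyCompleteLattice α] {f : ι → α}
    {M : α} (hle : ∀ i, f i ≤ M) {i₀ : ι} (h : f i₀ = M) : ⨆ i, f i = M :=
  IsGreatest.csSup_eq ⟨⟨i₀, h⟩, Set.forall_mem_range.2 hle⟩

theorem ciSup₃_eq_of_forall_le_of_eq {α ι κ ν : Type*} [ConditionallyCompleteLattice α]
    {f : ι → κ → ν → α} {M : α} (hle : ∀ i j k, f i j k ≤ M) {i₀ : ι} {j₀ : κ} {k₀ : ν}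
    (h : f i₀ j₀ k₀ = M) : ⨆ i, ⨆ j, ⨆ k, f i j k = M :=
  haveI : Nonempty κ := ⟨j₀⟩
  haveI : Nonempty ν := ⟨k₀⟩
  ciSup_eq_of_forall_le_of_eq (fun i => ciSup_le fun j => ciSup_le (hle i j))
    (ciSup_eq_of_forall_le_of_eq (fun j => ciSup_le (hle i₀ j))
      (ciSup_eq_of_forall_le_of_eq (hle i₀ j₀) h))

noncomputable def kernelCoeff (τ s ρ : ℝ) : ℂ := ((ρ ^ 2)⁻¹ : ℝ) - ((4 * τ)⁻¹ + (4 * s)⁻¹ : ℝ) * I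

theorem kernelCoeff_re (τ s ρ : ℝ) : (kernelCoeff τ s ρ).re = (ρ ^ 2)⁻¹ := by
  simp only [kernelCoeff, sub_re, ofReal_re, re_ofReal_mul, I_re, mul_zero, sub_zero]

theorem kernelCoeff_im (τ s ρ : ℝ) : (kernelCoeff τ s ρ).im = -((4 * τ)⁻¹ + (4 * s)⁻¹) := by
  simp only [kernelCoeff, sub_im, ofReal_im, im_ofReal_mul, I_im, mul_one, zero_sub]

theorem normSq_kernelCoeff (τ s ρ : ℝ) :
    normSq (kernelCoeff τ s ρ) = ((ρ ^ 2)⁻¹) ^ 2 + ((4 * τ)⁻¹ + (4 * s)⁻¹) ^ 2 := by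
  rw [normSq_apply, kernelCoeff_re, kernelCoeff_im]
  ring

theorem kernelCoeff_re_pos {ρ : ℝ} (hρ : ρ ≠ 0) (τ s : ℝ) : 0 < (kernelCoeff τ s ρ).re := by
  rw [kernelCoeff_re]
  positivity

theorem kernelCoeff_inv_re_nonneg (τ s ρ : ℝ) : 0 ≤ (kernelCoeff τ s ρ)⁻¹.re := by
  rw [inv_re, kernelCoeff_re]
  exact div_nonneg (by positivity) (normSq_nonneg _)

section

variable {V : Type*} [NormedAddCommGroup V] [InnerProductSpace ℝ V]

theorem kernel_phase_add_right (τ s ρ : ℝ) (x y z v : V) :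
    I * ((‖z - (v + x)‖ ^ 2 / (4 * τ) : ℝ) : ℂ) - ((‖x - (v + x)‖ ^ 2 / ρ ^ 2 : ℝ) : ℂ)
        + I * ((‖v + x - y‖ ^ 2 / (4 * s) : ℝ) : ℂ) =
      I * ((‖z - x‖ ^ 2 / (4 * τ) + ‖x - y‖ ^ 2 / (4 * s) : ℝ) : ℂ)
        + (-kernelCoeff τ s ρ * ‖v‖ ^ 2 + I * ⟪(2 * s)⁻¹ • (x - y) + (2 * τ)⁻¹ • (x - z), v⟫) := by
  rw [show z - (v + x) = z - x - v by abel, show x - (v + x) = -v by abel,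
    show v + x - y = x - y + v by abel, norm_sub_sq_real, norm_neg, norm_add_sq_real]
  simp only [kernelCoeff, inner_add_left, inner_sub_left, real_inner_smul_left]
  push_cast
  ring

variable [FiniteDimensional ℝ V] [MeasurableSpace V] [BorelSpace V]

theorem norm_integral_kernel {ρ : ℝ} (hρ : ρ ≠ 0) (τ s : ℝ) (x y z : V) :
    ‖∫ w : V, cexp (I * ((‖z - w‖ ^ 2 / (4 * τ) : ℝ) : ℂ) - ((‖x - w‖ ^ 2 / ρ ^ 2 : ℝ) : ℂ)
        + I * ((‖w - y‖ ^ 2 / (4 * s) : ℝ) : ℂ))‖ =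
      ‖(π / kernelCoeff τ s ρ) ^ (Module.finrank ℝ V / 2 : ℂ)‖ *
        Real.exp (-(‖(2 * s)⁻¹ • (x - y) + (2 * τ)⁻¹ • (x - z)‖ ^ 2 / 4) *
          (kernelCoeff τ s ρ)⁻¹.re) := by
  rw [← integral_add_right_eq_self (μ := (volume : Measure V)) _ x]
  simp_rw [kernel_phase_add_right, exp_add (I * _), integral_const_mul, norm_mul,
    norm_exp_I_mul_ofReal, one_mul]
  exact norm_integral_cexp_neg_mul_sq_norm_add_I_mul_inner (V := V) (kernelCoeff_re_pos hρ τ s) _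

end

theorem norm_gaussKernel {τ s ρ : ℝ} (hτ : 0 < τ) (hs : 0 < s) (hρ : 0 < ρ)
    (x y z : EuclideanSpace ℝ (Fin 4)) :
    ‖gaussKernel τ s ρ x y z‖ =
      (16 * π ^ 2 * (16 * s ^ 2 * τ ^ 2 + ρ ^ 4 * (s + τ) ^ 2))⁻¹ *
        Real.exp (-(‖(2 * s)⁻¹ • (x - y) + (2 * τ)⁻¹ • (x - z)‖ ^ 2 / 4) *
          (kernelCoeff τ s ρ)⁻¹.re) := by
  rw [gaussKernel, norm_mul, norm_integral_kernel hρ.ne', finrank_euclideanSpace_fin, ← mul_assoc,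
    show ((4 : ℕ) : ℂ) / 2 = 2 by norm_num, cpow_two, norm_inv, norm_pow, norm_pow, norm_div,
    norm_real, norm_real, Real.norm_of_nonneg (by positivity), Real.norm_of_nonneg Real.pi_pos.le,
    div_pow, Complex.sq_norm, normSq_kernelCoeff]
  congr 1
  field_simp
  ring

theorem norm_gaussKernel_le {τ s ρ : ℝ} (hτ : 0 < τ) (hs : 0 < s) (hρ : 0 < ρ)
    (x y z : EuclideanSpace ℝ (Fin 4)) :
    ‖gaussKernel τ s ρ x y z‖ ≤ (16 * π ^ 2 * (16 * s ^ 2 * τ ^ 2 + ρ ^ 4 * (s + τ) ^ 2))⁻¹ := by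
  rw [norm_gaussKernel hτ hs hρ]
  refine mul_le_of_le_one_right (by positivity) (Real.exp_le_one_iff.2 ?_)
  exact mul_nonpos_of_nonpos_of_nonneg (neg_nonpos.2 (by positivity))
    (kernelCoeff_inv_re_nonneg τ s ρ)

theorem norm_gaussKernel_diag {τ s ρ : ℝ} (hτ : 0 < τ) (hs : 0 < s) (hρ : 0 < ρ)
    (x : EuclideanSpace ℝ (Fin 4)) :
    ‖gaussKernel τ s ρ x x x‖ = (16 * π ^ 2 * (16 * s ^ 2 * τ ^ 2 + ρ ^ 4 * (s + τ) ^ 2))⁻¹ := by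
  simp [norm_gaussKernel hτ hs hρ]

theorem iSup_norm_gaussKernel {τ s ρ : ℝ} (hτ : 0 < τ) (hs : 0 < s) (hρ : 0 < ρ) :
    ⨆ x, ⨆ y, ⨆ z, ‖gaussKernel τ s ρ x y z‖ =
      (16 * π ^ 2 * (16 * s ^ 2 * τ ^ 2 + ρ ^ 4 * (s + τ) ^ 2))⁻¹ :=
  ciSup₃_eq_of_forall_le_of_eq (norm_gaussKernel_le hτ hs hρ) (norm_gaussKernel_diag hτ hs hρ 0)

/-- Gaussian kernel computation: for `s, τ, ρ > 0`,
`sup_{x,y,z} |K(τ,z;s,y;x)| ∼ [16 s²τ² + ρ⁴(s+τ)²]^{-1}` with absolute constants. -/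
theorem gaussian_kernel_bound :
    ∃ c C : ℝ, 0 < c ∧ 0 < C ∧
      ∀ τ s ρ : ℝ, 0 < τ → 0 < s → 0 < ρ →
        (c * (16 * s ^ 2 * τ ^ 2 + ρ ^ 4 * (s + τ) ^ 2)⁻¹ ≤
            ⨆ x : EuclideanSpace ℝ (Fin 4), ⨆ y : EuclideanSpace ℝ (Fin 4),
              ⨆ z : EuclideanSpace ℝ (Fin 4), ‖gaussKernel τ s ρ x y z‖) ∧
          (⨆ x : EuclideanSpace ℝ (Fin 4), ⨆ y : EuclideanSpace ℝ (Fin 4),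
              ⨆ z : EuclideanSpace ℝ (Fin 4), ‖gaussKernel τ s ρ x y z‖) ≤
            C * (16 * s ^ 2 * τ ^ 2 + ρ ^ 4 * (s + τ) ^ 2)⁻¹ := by
  refine ⟨(16 * π ^ 2)⁻¹, (16 * π ^ 2)⁻¹, by positivity, by positivity,
    fun τ s ρ hτ hs hρ => ?_⟩
  rw [iSup_norm_gaussKernel hτ hs hρ, mul_inv (16 * π ^ 2)]
  exact ⟨le_rfl, le_rfl⟩
end
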